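/- arXiv:2409.18133 — 3 statements merged into one kernel-verified Lean document; each statement's English description precedes it below -/
import Mathlib

section
/- For every finite word w on {0,1} with ℓ(w) ≥ 2, letting ê_w denote the orthogonal projection of L²(μ) onto the span of e_w, one has ‖K ê_w − ê_w K‖ = 1, ‖L ê_w − ê_w L‖ = 1, and consequently ‖[D, π(ê_w)]‖ = 1 (operator norms). -/
open MeasureTheory ContinuousLinearMap
open scoped RealInnerProductSpace InnerProductSpace ENNReal

noncomputable section

/-- The shift space `Ω = {0,1}^ℕ`, with `false` playing the role of the symbol `0`
and `true` of the symbol `1`. -/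
abbrev Ω : Type := ℕ → Bool

/-- The shift map `σ`, `σ(x)ₙ = x_{n+1}`. -/
def shiftMap : Ω → Ω := fun x n => x (n + 1)

/-- Prepending a symbol: `consSeq a x = ax`. -/
def consSeq (a : Bool) (x : Ω) : Ω := fun n => Nat.casesOn n a (fun k => x k)

/-- The cylinder set `[w]` of sequences beginning with the finite word `w`. -/
def cylinder (w : List Bool) : Set Ω := {x | ∀ i : Fin w.length, x (i : ℕ) = w.get i}

/-- The Hilbert space `L²(μ)` (real). -/
abbrev E (μ : Measure Ω) := Lp (α := Ω) ℝ 2 μ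

/-- The Hilbert space `H = L²(μ) × L²(μ)` with the norm `√(‖φ‖² + ‖ψ‖²)`. -/
abbrev HS (μ : Measure Ω) := WithLp 2 (E μ × E μ)

variable {μ : Measure Ω}

/-- The diagonal block operator `(φ, ψ) ↦ (A₁φ, A₂ψ)` on `H`. -/
def blockDiag (A₁ A₂ : E μ →L[ℝ] E μ) : HS μ →L[ℝ] HS μ :=
  ((WithLp.prodContinuousLinearEquiv 2 ℝ (E μ) (E μ)).symm.toContinuousLinearMap).comp
    (((A₁.comp (ContinuousLinearMap.fst ℝ (E μ) (E μ))).prod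
        (A₂.comp (ContinuousLinearMap.snd ℝ (E μ) (E μ)))).comp
      (WithLp.prodContinuousLinearEquiv 2 ℝ (E μ) (E μ)).toContinuousLinearMap)

/-- The antidiagonal block operator `(φ, ψ) ↦ (A₁ψ, A₂φ)` on `H`. -/
def blockAntidiag (A₁ A₂ : E μ →L[ℝ] E μ) : HS μ →L[ℝ] HS μ :=
  ((WithLp.prodContinuousLinearEquiv 2 ℝ (E μ) (E μ)).symm.toContinuousLinearMap).comp
    (((A₁.comp (ContinuousLinearMap.snd ℝ (E μ) (E μ))).prod
        (A₂.comp (ContinuousLinearMap.fst ℝ (E μ) (E μ)))).comp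
      (WithLp.prodContinuousLinearEquiv 2 ℝ (E μ) (E μ)).toContinuousLinearMap)

/-- The diagonal representation `π(A)(φ,ψ) = (Aφ, Aψ)`. -/
def diagRep (A : E μ →L[ℝ] E μ) : HS μ →L[ℝ] HS μ := blockDiag A A

/-- The Dirac operator `D(φ,ψ) = (Kψ, Lφ)` associated with the pair `(K, L)`. -/
def dirac (K L : E μ →L[ℝ] E μ) : HS μ →L[ℝ] HS μ := blockAntidiag K L

/-- The commutator `[D, π(A)]`. -/
def commD (K L A : E μ →L[ℝ] E μ) : HS μ →L[ℝ] HS μ :=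
  (dirac K L).comp (diagRep A) - (diagRep A).comp (dirac K L)

/-- The rank-one orthogonal projection onto the span of the unit vector `ψ`:
`φ ↦ ⟪ψ, φ⟫ • ψ`. -/
def rankOneProj (ψ : E μ) : E μ →L[ℝ] E μ := (innerSL ℝ ψ).smulRight ψ

/-- The Haar-basis element `e_w = 2^{ℓ(w)/2} (χ_{[w1]} - χ_{[w0]})`, as a function on `Ω`. -/
def haarFun (w : List Bool) : Ω → ℝ := fun x =>
  (2 : ℝ) ^ ((w.length : ℝ) / 2) *
    ((cylinder (w ++ [true])).indicator 1 x - (cylinder (w ++ [false])).indicator 1 x)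

lemma continuous_shiftMap : Continuous shiftMap :=
  continuous_pi fun n => continuous_apply (n + 1)

lemma continuous_consSeq (a : Bool) : Continuous (consSeq a) := by
  apply continuous_pi
  intro n
  cases n with
  | zero => exact continuous_const
  | succ k => exact continuous_apply k

/-- The Koopman operator on continuous functions: `f ↦ f ∘ σ`. -/
def koopmanC (f : C(Ω, ℝ)) : C(Ω, ℝ) := f.comp ⟨shiftMap, continuous_shiftMap⟩

/-- The Ruelle operator on continuous functions: `(Lf)(x) = (f(0x) + f(1x))/2`. -/
def ruelleC (f : C(Ω, ℝ)) : C(Ω, ℝ) :=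
  ⟨fun x => (f (consSeq false x) + f (consSeq true x)) / 2,
    ((f.continuous.comp (continuous_consSeq false)).add
      (f.continuous.comp (continuous_consSeq true))).div_const 2⟩

end

/-!
The shift preserves `μ` (compare both measures on cylinders), so the Koopman operator `K` is an
isometry of `L²(μ)`; and `e_w` is a unit vector orthogonal to `K e_w`, because
`μ([wb] ∩ σ⁻¹[wb'])` does not depend on `b'`.

For an isometry `K` and a unit vector `u ⊥ Ku`, the commutator `[K, P_u]` sends `φ` to
`⟪u, φ⟫ Ku - ⟪u, Kφ⟫ u`, a sum of orthogonal terms with `|⟪u, Kφ⟫| ≤ ‖φ - ⟪u, φ⟫ u‖`; so its norm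
is at most `1`, and it is attained at `u`. The commutator with `L = K†` is minus the adjoint of
`[K, P_u]`, and `[D, π(P_u)]` is the antidiagonal block operator built from the two commutators.
-/

open InnerProductSpace

section Hilbert

variable {F : Type*} [NormedAddCommGroup F] [InnerProductSpace ℝ F]

theorem norm_comp_rankOne_sub_rankOne_comp_of_isometry {K : F →L[ℝ] F}
    (hK : ∀ x, ‖K x‖ = ‖x‖) {u : F} (hu : ‖u‖ = 1) (huK : ⟪u, K u⟫ = 0) :
    ‖K ∘L rankOne ℝ u u - rankOne ℝ u u ∘L K‖ = 1 := by
  have happly : ∀ φ,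
      (K ∘L rankOne ℝ u u - rankOne ℝ u u ∘L K) φ = ⟪u, φ⟫ • K u - ⟪u, K φ⟫ • u :=
    fun φ => by simp
  refine le_antisymm (opNorm_le_bound _ zero_le_one fun φ => ?_) ?_
  · set c := ⟪u, φ⟫
    set ψ := φ - c • u
    have hφ : ‖φ‖ ^ 2 = c ^ 2 + ‖ψ‖ ^ 2 := by
      have hψu : ⟪c • u, ψ⟫ = 0 := by
        rw [real_inner_smul_left, inner_sub_right, real_inner_smul_right,
          real_inner_self_eq_norm_sq, hu]
        ring
      have := norm_add_sq_eq_norm_sq_add_norm_sq_real hψu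
      rw [add_sub_cancel, norm_smul, hu] at this
      simp only [sq, this, Real.norm_eq_abs, mul_one, abs_mul_abs_self]
    have hKφ : ⟪u, K φ⟫ = ⟪u, K ψ⟫ := by
      simp [ψ, inner_sub_right, real_inner_smul_right, huK]
    have hKψ : |⟪u, K ψ⟫| ≤ ‖ψ‖ := by
      simpa [hu, hK] using abs_real_inner_le_norm u (K ψ)
    have hT : ‖c • K u - ⟪u, K ψ⟫ • u‖ ^ 2 = c ^ 2 + ⟪u, K ψ⟫ ^ 2 := by
      have := norm_sub_sq_eq_norm_sq_add_norm_sq_real (x := c • K u) (y := ⟪u, K ψ⟫ • u)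
        (by simp [real_inner_smul_right, real_inner_comm u, huK])
      rw [norm_smul, norm_smul, hK, hu] at this
      simp only [sq, this, Real.norm_eq_abs, mul_one, abs_mul_abs_self]
    have hKψ_sq := pow_le_pow_left₀ (abs_nonneg _) hKψ 2
    rw [sq_abs] at hKψ_sq
    rw [happly, one_mul, hKφ]
    refine le_of_sq_le_sq ?_ (norm_nonneg φ)
    linarith
  · simpa [happly, huK, hK, hu] using (K ∘L rankOne ℝ u u - rankOne ℝ u u ∘L K).le_opNorm u

theorem norm_adjoint_comp_sub_comp_adjoint [CompleteSpace F] (A : F →L[ℝ] F) {P : F →L[ℝ] F}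
    (hP : IsSelfAdjoint P) : ‖adjoint A ∘L P - P ∘L adjoint A‖ = ‖A ∘L P - P ∘L A‖ := by
  rw [← norm_neg, ← adjoint.norm_map (A ∘L P - P ∘L A)]
  simp [adjoint_comp, hP.adjoint_eq]

end Hilbert

section Integrals

variable {α : Type*} [MeasurableSpace α] {μ : Measure α}

lemma integral_indicator_sub_mul_indicator_sub [IsFiniteMeasure μ] {A B C D : Set α}
    (hA : MeasurableSet A) (hB : MeasurableSet B) (hC : MeasurableSet C) (hD : MeasurableSet D) :
    ∫ x, (A.indicator 1 x - B.indicator 1 x) * (C.indicator 1 x - D.indicator 1 x) ∂μ =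
      μ.real (A ∩ C) - μ.real (A ∩ D) - μ.real (B ∩ C) + μ.real (B ∩ D) := by
  have hint : ∀ {s : Set α}, MeasurableSet s → Integrable (s.indicator (1 : α → ℝ)) μ :=
    fun hs => (integrable_const 1).indicator hs
  have hexpand : (fun x => (A.indicator (1 : α → ℝ) x - B.indicator 1 x) *
      (C.indicator 1 x - D.indicator 1 x)) = (A ∩ C).indicator 1 -
        (A ∩ D).indicator 1 - (B ∩ C).indicator 1 + (B ∩ D).indicator 1 := by
    ext x
    simp only [Set.inter_indicator_one, Pi.mul_apply, Pi.add_apply, Pi.sub_apply]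
    ring
  rw [hexpand, integral_add' (((hint (hA.inter hC)).sub (hint (hA.inter hD))).sub
      (hint (hB.inter hC))) (hint (hB.inter hD)),
    integral_sub' ((hint (hA.inter hC)).sub (hint (hA.inter hD))) (hint (hB.inter hC)),
    integral_sub' (hint (hA.inter hC)) (hint (hA.inter hD))]
  simp only [integral_indicator_one, hA.inter hC, hA.inter hD, hB.inter hC, hB.inter hD]

lemma inner_eq_integral_of_ae_eq {f g : Lp ℝ 2 μ} {F G : α → ℝ} (hf : f =ᵐ[μ] F)
    (hg : g =ᵐ[μ] G) : ⟪f, g⟫ = ∫ x, F x * G x ∂μ := by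
  rw [L2.inner_def]
  refine integral_congr_ae ?_
  filter_upwards [hf, hg] with x hfx hgx
  simp [hfx, hgx, mul_comm]

lemma norm_eq_of_ae_eq_comp {E : Type*} [NormedAddCommGroup E] {p : ℝ≥0∞} {f : α → α}
    (hf : MeasurePreserving f μ μ) {g h : Lp E p μ} (hgh : h =ᵐ[μ] g ∘ f) : ‖h‖ = ‖g‖ := by
  rw [show h = Lp.compMeasurePreserving f hf g from
      Lp.ext (hgh.trans (Lp.coeFn_compMeasurePreserving g hf).symm),
    Lp.norm_compMeasurePreserving]

end Integrals

namespace FullShift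

lemma mem_cylinder {v : List Bool} {x : Ω} : x ∈ cylinder v ↔ ∀ i : Fin v.length, x i = v[i] :=
  Iff.rfl

lemma mem_cylinder_cons {a : Bool} {v : List Bool} {x : Ω} :
    x ∈ cylinder (a :: v) ↔ x 0 = a ∧ shiftMap x ∈ cylinder v := by
  simp only [mem_cylinder, List.length_cons, Fin.forall_fin_succ]
  rfl

lemma measurableSet_cylinder (v : List Bool) : MeasurableSet (cylinder v) := by
  have h : cylinder v = ⋂ i : Fin v.length, (fun x : Ω => x i) ⁻¹' {v.get i} := by
    ext x; simp [mem_cylinder]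
  rw [h]
  exact .iInter fun i => measurable_pi_apply _ (.singleton _)

lemma cylinder_subset_of_prefix {u v : List Bool} (h : u <+: v) : cylinder v ⊆ cylinder u := by
  intro x hx i
  simpa [h.getElem i.2] using hx ⟨i, i.2.trans_le h.length_le⟩

lemma prefix_of_mem_cylinder_inter {u v : List Bool} (hlen : u.length ≤ v.length) {x : Ω}
    (hx : x ∈ cylinder u ∩ cylinder v) : u <+: v := by
  rw [List.prefix_iff_eq_take]
  refine List.ext_getElem (by simp [hlen]) fun n h₁ _ => ?_
  have hu := hx.1 ⟨n, h₁⟩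
  have hv := hx.2 ⟨n, h₁.trans_le hlen⟩
  simp only [List.get_eq_getElem] at hu hv
  rw [List.getElem_take, ← hu, ← hv]

lemma cylinder_inter_cylinder {u v : List Bool} (hlen : u.length ≤ v.length) :
    cylinder u ∩ cylinder v = if u <+: v then cylinder v else ∅ := by
  split_ifs with h
  · exact Set.inter_eq_self_of_subset_right (cylinder_subset_of_prefix h)
  · exact Set.eq_empty_of_forall_notMem fun x hx => h (prefix_of_mem_cylinder_inter hlen hx)

lemma isPiSystem_cylinders : IsPiSystem (Set.range cylinder) := by
  have key : ∀ u v : List Bool, u.length ≤ v.length →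
      (cylinder u ∩ cylinder v).Nonempty → cylinder u ∩ cylinder v ∈ Set.range cylinder := by
    intro u v hlen hne
    rw [cylinder_inter_cylinder hlen] at hne ⊢
    split_ifs at hne ⊢
    · exact ⟨v, rfl⟩
    · exact absurd hne Set.not_nonempty_empty
  rintro _ ⟨u, rfl⟩ _ ⟨v, rfl⟩ hne
  rcases le_total u.length v.length with h | h
  · exact key u v h hne
  · rw [Set.inter_comm] at hne ⊢
    exact key v u h hne

lemma coord_preimage_eq_iUnion_cylinder (n : ℕ) (b : Bool) :
    (fun x : Ω => x n) ⁻¹' {b} = ⋃ v : Fin n → Bool, cylinder (List.ofFn v ++ [b]) := by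
  ext x
  simp only [Set.mem_preimage, Set.mem_singleton_iff, Set.mem_iUnion]
  constructor
  · intro hx
    refine ⟨fun j => x j, fun i => ?_⟩
    rcases Nat.lt_or_ge i n with h | h
    · simp [List.getElem_append_left, h]
    · have hi : (i : ℕ) = n := le_antisymm (Nat.lt_succ_iff.mp (by simpa using i.2)) h
      simp [List.getElem_append_right, hi, hx]
  · rintro ⟨v, hv⟩
    simpa using hv ⟨n, by simp⟩

lemma generateFrom_cylinders :
    MeasurableSpace.generateFrom (Set.range cylinder) = MeasurableSpace.pi := by
  refine le_antisymm (MeasurableSpace.generateFrom_le ?_) (iSup_le fun i s hs => ?_)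
  · rintro _ ⟨v, rfl⟩
    exact measurableSet_cylinder v
  · obtain ⟨t, -, rfl⟩ := hs
    rw [← Set.biUnion_of_singleton t, Set.preimage_iUnion₂]
    refine .biUnion t.to_countable fun b _ => ?_
    rw [coord_preimage_eq_iUnion_cylinder]
    exact .iUnion fun v => MeasurableSpace.measurableSet_generateFrom ⟨_, rfl⟩

lemma measurable_shiftMap : Measurable shiftMap :=
  measurable_pi_iff.mpr fun n => measurable_pi_apply (n + 1)

lemma shiftMap_preimage_cylinder (v : List Bool) :
    shiftMap ⁻¹' cylinder v = cylinder (false :: v) ∪ cylinder (true :: v) := by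
  ext x
  cases h : x 0 <;> simp [mem_cylinder_cons, h]

lemma disjoint_cylinder_false_true (u v : List Bool) :
    Disjoint (cylinder (false :: u)) (cylinder (true :: v)) :=
  Set.disjoint_left.mpr fun x hx hx' => by simp_all [mem_cylinder_cons]

variable {μ : Measure Ω}

theorem measurePreserving_shiftMap [IsFiniteMeasure μ]
    (hμ : ∀ w : List Bool, μ (cylinder w) = (1 / 2) ^ w.length) :
    MeasurePreserving shiftMap μ μ := by
  refine ⟨measurable_shiftMap, ext_of_generate_finite _ generateFrom_cylinders.symm
    isPiSystem_cylinders ?_ (by simp [Measure.map_apply measurable_shiftMap .univ])⟩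
  rintro _ ⟨v, rfl⟩
  rw [Measure.map_apply measurable_shiftMap (measurableSet_cylinder v),
    shiftMap_preimage_cylinder, measure_union (disjoint_cylinder_false_true v v)
      (measurableSet_cylinder _), hμ, hμ, hμ, List.length_cons, List.length_cons, pow_succ,
    ← mul_add, ENNReal.add_halves, mul_one]

lemma measureReal_cylinder (hμ : ∀ w : List Bool, μ (cylinder w) = (1 / 2) ^ w.length)
    (v : List Bool) : μ.real (cylinder v) = (1 / 2) ^ v.length := by
  simp [measureReal_def, hμ]

lemma cylinder_append_inter_cylinder_cons_append (w : List Bool) (a b b' : Bool) :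
    cylinder (w ++ [b]) ∩ cylinder (a :: (w ++ [b'])) =
      if w ++ [b] <+: a :: w then cylinder (a :: (w ++ [b'])) else ∅ := by
  rw [cylinder_inter_cylinder (by simp)]
  refine if_congr ?_ rfl rfl
  rw [← List.cons_append, List.prefix_concat_iff, or_iff_right]
  intro h
  simpa using congrArg List.length h

lemma measureReal_cylinder_append_inter_shiftMap_preimage [IsFiniteMeasure μ]
    (hμ : ∀ w : List Bool, μ (cylinder w) = (1 / 2) ^ w.length) (w : List Bool) (b b' : Bool) :
    μ.real (cylinder (w ++ [b]) ∩ shiftMap ⁻¹' cylinder (w ++ [b'])) =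
      ∑ a : Bool, if w ++ [b] <+: a :: w then (1 / 2) ^ (w.length + 2) else 0 := by
  have hdisj := (disjoint_cylinder_false_true (w ++ [b']) (w ++ [b'])).mono
    (Set.inter_subset_right (s := cylinder (w ++ [b])))
    (Set.inter_subset_right (s := cylinder (w ++ [b])))
  rw [shiftMap_preimage_cylinder, Set.inter_union_distrib_left,
    measureReal_union hdisj ((measurableSet_cylinder _).inter (measurableSet_cylinder _)),
    cylinder_append_inter_cylinder_cons_append, cylinder_append_inter_cylinder_cons_append,
    Fintype.sum_bool]
  split_ifs <;> simp [measureReal_cylinder hμ]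

lemma integral_haarFun_mul_haarFun_comp [IsFiniteMeasure μ] (w : List Bool) {f : Ω → Ω}
    (hf : Measurable f) :
    ∫ x, haarFun w x * haarFun w (f x) ∂μ = 2 ^ w.length *
      (μ.real (cylinder (w ++ [true]) ∩ f ⁻¹' cylinder (w ++ [true]))
        - μ.real (cylinder (w ++ [true]) ∩ f ⁻¹' cylinder (w ++ [false]))
        - μ.real (cylinder (w ++ [false]) ∩ f ⁻¹' cylinder (w ++ [true]))
        + μ.real (cylinder (w ++ [false]) ∩ f ⁻¹' cylinder (w ++ [false]))) := by
  have hsq : (2 : ℝ) ^ ((w.length : ℝ) / 2) * 2 ^ ((w.length : ℝ) / 2) = 2 ^ w.length := by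
    rw [← Real.rpow_add two_pos, add_halves, Real.rpow_natCast]
  simp only [haarFun, ← Set.indicator_comp_right, Pi.one_comp, mul_mul_mul_comm _ (_ - _),
    integral_const_mul, hsq]
  rw [integral_indicator_sub_mul_indicator_sub (measurableSet_cylinder _)
    (measurableSet_cylinder _) (hf (measurableSet_cylinder _)) (hf (measurableSet_cylinder _))]

lemma cylinder_append_true_inter_false (w : List Bool) :
    cylinder (w ++ [true]) ∩ cylinder (w ++ [false]) = ∅ := by
  simp [cylinder_inter_cylinder]

theorem integral_haarFun_mul_self [IsFiniteMeasure μ]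
    (hμ : ∀ w : List Bool, μ (cylinder w) = (1 / 2) ^ w.length) (w : List Bool) :
    ∫ x, haarFun w x * haarFun w x ∂μ = 1 := by
  have := integral_haarFun_mul_haarFun_comp (μ := μ) w measurable_id
  simp only [id, Set.preimage_id, Set.inter_self, cylinder_append_true_inter_false,
    Set.inter_comm (cylinder (w ++ [false])), measureReal_cylinder hμ] at this
  rw [this]
  simp only [measureReal_empty, sub_zero, List.length_append, List.length_singleton]
  rw [← two_mul, pow_succ, one_div, inv_pow]
  field_simp

theorem integral_haarFun_mul_haarFun_shiftMap [IsFiniteMeasure μ]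
    (hμ : ∀ w : List Bool, μ (cylinder w) = (1 / 2) ^ w.length) (w : List Bool) :
    ∫ x, haarFun w x * haarFun w (shiftMap x) ∂μ = 0 := by
  simp [integral_haarFun_mul_haarFun_comp w measurable_shiftMap,
    measureReal_cylinder_append_inter_shiftMap_preimage hμ]

end FullShift

section Blocks

variable {μ : Measure Ω}

lemma blockAntidiag_apply (A₁ A₂ : E μ →L[ℝ] E μ) (z : HS μ) :
    blockAntidiag A₁ A₂ z = WithLp.toLp 2 (A₁ z.snd, A₂ z.fst) := rfl

theorem norm_blockAntidiag (A₁ A₂ : E μ →L[ℝ] E μ) :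
    ‖blockAntidiag A₁ A₂‖ = max ‖A₁‖ ‖A₂‖ := by
  refine le_antisymm (opNorm_le_bound _ (by positivity) fun z => ?_) (max_le ?_ ?_)
  · have h₁ : ‖A₁ z.snd‖ ≤ max ‖A₁‖ ‖A₂‖ * ‖z.snd‖ :=
      A₁.le_of_opNorm_le (le_max_left _ _) _
    have h₂ : ‖A₂ z.fst‖ ≤ max ‖A₁‖ ‖A₂‖ * ‖z.fst‖ :=
      A₂.le_of_opNorm_le (le_max_right _ _) _
    refine le_of_sq_le_sq ?_ (by positivity)
    rw [blockAntidiag_apply, WithLp.prod_norm_sq_eq_of_L2, mul_pow, WithLp.prod_norm_sq_eq_of_L2]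
    simp only [WithLp.toLp_fst, WithLp.toLp_snd]
    nlinarith [pow_le_pow_left₀ (norm_nonneg _) h₁ 2, pow_le_pow_left₀ (norm_nonneg _) h₂ 2]
  · refine opNorm_le_bound _ (norm_nonneg _) fun ψ => ?_
    simpa [blockAntidiag_apply] using (blockAntidiag A₁ A₂).le_opNorm (WithLp.toLp 2 (0, ψ))
  · refine opNorm_le_bound _ (norm_nonneg _) fun φ => ?_
    simpa [blockAntidiag_apply] using (blockAntidiag A₁ A₂).le_opNorm (WithLp.toLp 2 (φ, 0))

lemma commD_eq_blockAntidiag (K L A : E μ →L[ℝ] E μ) :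
    commD K L A = blockAntidiag (K ∘L A - A ∘L K) (L ∘L A - A ∘L L) := by
  rfl

end Blocks

theorem stmt4_general
    (μ : Measure Ω) [IsProbabilityMeasure μ]
    (hμ : ∀ w : List Bool, μ (cylinder w) = (1 / 2) ^ w.length)
    (K L : E μ →L[ℝ] E μ)
    (hK : ∀ g : E μ, (K g : Ω → ℝ) =ᵐ[μ] fun x => g (shiftMap x))
    (hadj : ContinuousLinearMap.adjoint K = L)
    (e : List Bool → E μ) (he : ∀ w : List Bool, (e w : Ω → ℝ) =ᵐ[μ] haarFun w)
    (w : List Bool) :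
    ‖K ∘L rankOneProj (e w) - rankOneProj (e w) ∘L K‖ = 1 ∧
    ‖L ∘L rankOneProj (e w) - rankOneProj (e w) ∘L L‖ = 1 ∧
    ‖commD K L (rankOneProj (e w))‖ = 1 := by
  have hσ := FullShift.measurePreserving_shiftMap hμ
  have hKe : ⇑(K (e w)) =ᵐ[μ] fun x => haarFun w (shiftMap x) :=
    (hK (e w)).trans (hσ.quasiMeasurePreserving.ae_eq_comp (he w))
  have hnorm : ‖e w‖ = 1 := by
    rw [norm_eq_sqrt_real_inner, inner_eq_integral_of_ae_eq (he w) (he w),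
      FullShift.integral_haarFun_mul_self hμ, Real.sqrt_one]
  have horth : ⟪e w, K (e w)⟫ = 0 := by
    rw [inner_eq_integral_of_ae_eq (he w) hKe,
      FullShift.integral_haarFun_mul_haarFun_shiftMap hμ]
  have hKcomm : ‖K ∘L rankOneProj (e w) - rankOneProj (e w) ∘L K‖ = 1 :=
    norm_comp_rankOne_sub_rankOne_comp_of_isometry
      (fun g => norm_eq_of_ae_eq_comp hσ (hK g)) hnorm horth
  have hLcomm : ‖L ∘L rankOneProj (e w) - rankOneProj (e w) ∘L L‖ = 1 := by
    rw [← hadj]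
    exact (norm_adjoint_comp_sub_comp_adjoint K
      (isSelfAdjoint_iff'.mpr (adjoint_rankOne (e w) (e w)))).trans hKcomm
  refine ⟨hKcomm, hLcomm, ?_⟩
  rw [commD_eq_blockAntidiag, norm_blockAntidiag, hKcomm, hLcomm, max_self]

/-- For any word `w` with `ℓ(w) ≥ 2`, the projection `ê_w` onto `e_w` satisfies
`‖K ê_w − ê_w K‖ = ‖L ê_w − ê_w L‖ = ‖[D, π(ê_w)]‖ = 1`. -/
theorem stmt4
    (μ : Measure Ω) [IsProbabilityMeasure μ]
    (hμ : ∀ w : List Bool, μ (cylinder w) = (1 / 2) ^ w.length)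
    (K L : E μ →L[ℝ] E μ)
    (hK : ∀ g : E μ, (K g : Ω → ℝ) =ᵐ[μ] fun x => g (shiftMap x))
    (hL : ∀ g : E μ, (L g : Ω → ℝ) =ᵐ[μ]
      fun x => (g (consSeq false x) + g (consSeq true x)) / 2)
    (hadj : ContinuousLinearMap.adjoint K = L)
    (e : List Bool → E μ) (he : ∀ w : List Bool, (e w : Ω → ℝ) =ᵐ[μ] haarFun w)
    (w : List Bool) (hw : 2 ≤ w.length) :
    ‖K ∘L rankOneProj (e w) - rankOneProj (e w) ∘L K‖ = 1 ∧
    ‖L ∘L rankOneProj (e w) - rankOneProj (e w) ∘L L‖ = 1 ∧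
    ‖commD K L (rankOneProj (e w))‖ = 1 :=
  stmt4_general μ hμ K L hK hadj e he w
end

section
/- Let w and w̃ be finite words on {0,1} with ℓ(w) ≥ 2 and ℓ(w̃) ≥ 1, and let ê_w be the orthogonal projection of L²(μ) onto the span of e_w. Then ‖(K ê_w − ê_w K)(e_{w̃})‖² equals 1 if w̃ = w, equals 1/2 if w̃ = σ(w) (and w̃ ≠ w), and equals 0 if w̃ ≠ w and w̃ ≠ σ(w). Moreover ‖(L ê_w − ê_w L)(e_{w̃})‖² equals 1/2 if w̃ = w or if σ(w̃) = w (with w̃ ≠ w), and equals 0 if w̃ ≠ w and σ(w̃) ≠ w. Here σ(u) denotes the word u with its first letter removed. -/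
open MeasureTheory ContinuousLinearMap
open scoped RealInnerProductSpace InnerProductSpace ENNReal

/-!
On cylinder indicators the two operators act by `K χ_[w] = χ_[0w] + χ_[1w]` and
`L χ_[bw] = χ_[w] / 2`, hence `K e_w = (e_{0w} + e_{1w}) / √2` and `L e_{bw} = e_w / √2`.
These identities hold in `L²(μ)`, i.e. almost everywhere, so they need `σ` to preserve `μ` and
the maps `x ↦ ax` to be nonsingular; both are checked on cylinders, a π-system generating the
product σ-algebra. The family `(e_w)` is orthonormal, and for a unit vector `ψ` one has
`(T ψψ* - ψψ* T) φ = ⟪ψ, φ⟫ T ψ - ⟪ψ, T φ⟫ ψ`, so each case of the theorem only reads off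
the two coefficients `⟪e_w, e_w̃⟫` and `⟪e_w, T e_w̃⟫`.
-/

namespace BernoulliShift

def IsUniformBernoulli (μ : Measure Ω) : Prop :=
  ∀ w : List Bool, μ (cylinder w) = (1 / 2) ^ w.length

def IsKoopman {μ : Measure Ω} (K : E μ →L[ℝ] E μ) : Prop :=
  ∀ g : E μ, (K g : Ω → ℝ) =ᵐ[μ] fun x => g (shiftMap x)

def IsRuelle {μ : Measure Ω} (L : E μ →L[ℝ] E μ) : Prop :=
  ∀ g : E μ, (L g : Ω → ℝ) =ᵐ[μ] fun x => (g (consSeq false x) + g (consSeq true x)) / 2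

section Cylinders

lemma mem_cylinder_iff {w : List Bool} {x : Ω} :
    x ∈ cylinder w ↔ (List.range w.length).map x = w := by
  simp only [_root_.cylinder, List.ext_get_iff, List.length_map, List.length_range,
    true_and, List.get_eq_getElem, List.getElem_map, List.getElem_range]
  exact ⟨fun h i hi _ => h ⟨i, hi⟩, fun h i => h i i.2 (by simp)⟩

lemma take_map_range (x : Ω) {m n : ℕ} (h : m ≤ n) :
    ((List.range n).map x).take m = (List.range m).map x := by
  rw [← List.map_take, List.take_range, min_eq_left h]

lemma prefix_of_mem_cylinder {s t : List Bool} {x : Ω} (hs : x ∈ cylinder s)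
    (ht : x ∈ cylinder t) (hl : s.length ≤ t.length) : s <+: t := by
  rw [mem_cylinder_iff] at hs ht
  rw [List.prefix_iff_eq_take, ← ht, take_map_range x hl, hs]

lemma cylinder_subset_of_prefix {s t : List Bool} (h : s <+: t) : cylinder t ⊆ cylinder s := by
  obtain ⟨r, rfl⟩ := h
  intro x hx
  rw [mem_cylinder_iff] at hx ⊢
  rw [← take_map_range x (List.prefix_append s r).length_le, hx, List.take_left]

lemma disjoint_cylinder {s t : List Bool} (hst : ¬ s <+: t) (hts : ¬ t <+: s) :
    Disjoint (cylinder s) (cylinder t) := by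
  refine Set.disjoint_left.2 fun x hs ht => ?_
  rcases le_total s.length t.length with hl | hl
  exacts [hst (prefix_of_mem_cylinder hs ht hl), hts (prefix_of_mem_cylinder ht hs hl)]

lemma cylinder_nil : cylinder [] = Set.univ := by
  ext x; simp [mem_cylinder_iff]

lemma mem_cylinder_cons {a : Bool} {w : List Bool} {x : Ω} :
    x ∈ cylinder (a :: w) ↔ x 0 = a ∧ shiftMap x ∈ cylinder w := by
  simp only [mem_cylinder_iff, List.length_cons, List.range_succ_eq_map, List.map_cons,
    List.map_map, List.cons.injEq]
  rfl

lemma preimage_shiftMap_cylinder (w : List Bool) :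
    shiftMap ⁻¹' cylinder w = cylinder (false :: w) ∪ cylinder (true :: w) := by
  ext x
  simp only [Set.mem_preimage, Set.mem_union, mem_cylinder_cons]
  cases x 0 <;> simp

lemma consSeq_mem_cylinder_cons {a b : Bool} {t : List Bool} {x : Ω} :
    consSeq a x ∈ cylinder (b :: t) ↔ a = b ∧ x ∈ cylinder t :=
  mem_cylinder_cons

lemma disjoint_cylinder_cons (w : List Bool) :
    Disjoint (cylinder (false :: w)) (cylinder (true :: w)) :=
  disjoint_cylinder (by simp) (by simp)

lemma mem_cylinder_append_singleton {u : List Bool} {b : Bool} {x : Ω} :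
    x ∈ cylinder (u ++ [b]) ↔ x ∈ cylinder u ∧ x u.length = b := by
  simp only [mem_cylinder_iff, List.length_append, List.length_singleton, List.range_succ,
    List.map_append, List.map_singleton, List.append_singleton_inj]

lemma disjoint_cylinder_append_singleton (u : List Bool) :
    Disjoint (cylinder (u ++ [true])) (cylinder (u ++ [false])) :=
  disjoint_cylinder (by simp) (by simp)

end Cylinders

section Measures

lemma measurableSet_cylinder (w : List Bool) : MeasurableSet (cylinder w) := by
  have : cylinder w = ⋂ i : Fin w.length, {x : Ω | x i = w.get i} := by
    ext; simp [_root_.cylinder]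
  rw [this]
  exact MeasurableSet.iInter fun i => measurableSet_eq_fun (measurable_pi_apply _) measurable_const

lemma isPiSystem_range_cylinder : IsPiSystem (Set.range cylinder) := by
  rintro _ ⟨s, rfl⟩ _ ⟨t, rfl⟩ ⟨x, hs, ht⟩
  rcases le_total s.length t.length with hl | hl
  · exact ⟨t, (Set.inter_eq_right.2 (cylinder_subset_of_prefix
      (prefix_of_mem_cylinder hs ht hl))).symm⟩
  · exact ⟨s, (Set.inter_eq_left.2 (cylinder_subset_of_prefix
      (prefix_of_mem_cylinder ht hs hl))).symm⟩

lemma generateFrom_range_cylinder :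
    MeasurableSpace.pi = MeasurableSpace.generateFrom (Set.range cylinder) := by
  refine le_antisymm ?_ (MeasurableSpace.generateFrom_le ?_)
  · refine iSup_le fun i => Measurable.comap_le
      (@measurable_to_countable' _ _ _ _ (MeasurableSpace.generateFrom _) _ fun b => ?_)
    have : (fun x : Ω => x i) ⁻¹' {b} =
        ⋃ (u : List Bool) (_ : u.length = i), cylinder (u ++ [b]) := by
      ext y
      simp only [Set.mem_preimage, Set.mem_singleton_iff, Set.mem_iUnion,
        mem_cylinder_append_singleton, exists_prop]
      refine ⟨fun h => ⟨(List.range i).map y, by simp, by simp [mem_cylinder_iff], by simpa⟩,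
        ?_⟩
      rintro ⟨u, rfl, -, h⟩
      exact h
    rw [this]
    exact MeasurableSet.iUnion fun u => MeasurableSet.iUnion fun _ =>
      MeasurableSpace.measurableSet_generateFrom ⟨_, rfl⟩
  · rintro _ ⟨w, rfl⟩
    exact measurableSet_cylinder w

lemma measure_ext_of_cylinder {μ ν : Measure Ω} [IsFiniteMeasure μ]
    (h : ∀ w, μ (cylinder w) = ν (cylinder w)) : μ = ν :=
  ext_of_generate_finite _ generateFrom_range_cylinder isPiSystem_range_cylinder
    (by rintro _ ⟨w, rfl⟩; exact h w) (by simpa [cylinder_nil] using h [])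

lemma measurable_shiftMap : Measurable shiftMap :=
  continuous_shiftMap.measurable

lemma measurable_consSeq (a : Bool) : Measurable (consSeq a) :=
  (continuous_consSeq a).measurable

lemma measureReal_cylinder {μ : Measure Ω} (hμ : IsUniformBernoulli μ)
    (w : List Bool) : μ.real (cylinder w) = (1 / 2) ^ w.length := by
  rw [measureReal_def, hμ]
  simp

variable {μ : Measure Ω} [IsFiniteMeasure μ]

lemma measurePreserving_shiftMap (hμ : IsUniformBernoulli μ) :
    MeasurePreserving shiftMap μ μ := by
  refine ⟨measurable_shiftMap, (measure_ext_of_cylinder fun w => ?_).symm⟩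
  rw [Measure.map_apply measurable_shiftMap (measurableSet_cylinder w),
    preimage_shiftMap_cylinder, measure_union (disjoint_cylinder_cons w)
      (measurableSet_cylinder _), hμ, hμ, hμ]
  simp only [List.length_cons, pow_succ]
  rw [← mul_add, ENNReal.add_halves, mul_one]

/-- The Bernoulli measure is invariant under the dual of the Ruelle operator. -/
lemma map_consSeq_false_add_map_consSeq_true
    (hμ : IsUniformBernoulli μ) :
    μ.map (consSeq false) + μ.map (consSeq true) = (2 : ℝ≥0∞) • μ := by
  refine measure_ext_of_cylinder fun w => ?_
  simp only [Measure.add_apply, Measure.smul_apply, smul_eq_mul,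
    Measure.map_apply (measurable_consSeq _) (measurableSet_cylinder w)]
  rw [hμ]
  cases w with
  | nil =>
    simp only [cylinder_nil, Set.preimage_univ]
    rw [← cylinder_nil, hμ]
    norm_num
  | cons b t =>
    have (a : Bool) : consSeq a ⁻¹' cylinder (b :: t) = if a = b then cylinder t else ∅ := by
      ext x; split_ifs <;> simp_all [consSeq_mem_cylinder_cons]
    rw [this, this, List.length_cons, pow_succ, ← mul_assoc, mul_comm 2, mul_assoc, one_div,
      ENNReal.mul_inv_cancel two_ne_zero ENNReal.ofNat_ne_top, mul_one]
    cases b <;> simp [hμ t]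

lemma quasiMeasurePreserving_consSeq
    (hμ : IsUniformBernoulli μ) (a : Bool) :
    Measure.QuasiMeasurePreserving (consSeq a) μ μ := by
  refine ⟨measurable_consSeq a, ?_⟩
  have h := map_consSeq_false_add_map_consSeq_true hμ ▸
    (Measure.smul_absolutelyContinuous (μ := μ) (c := 2))
  rw [Measure.AbsolutelyContinuous.add_left_iff] at h
  cases a
  exacts [h.1, h.2]

end Measures

lemma norm_inv_sqrt_two_smul_sq {F : Type*} [NormedAddCommGroup F] [NormedSpace ℝ F] {x : F}
    (hx : ‖x‖ = 1) : ‖(√2)⁻¹ • x‖ ^ 2 = 1 / 2 := by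
  rw [norm_smul, hx, mul_one, Real.norm_eq_abs, sq_abs, inv_pow, Real.sq_sqrt zero_le_two,
    one_div]

lemma apply_rankOneProj_sub_rankOneProj_apply {μ : Measure Ω} (T : E μ →L[ℝ] E μ)
    (ψ φ : E μ) :
    T (rankOneProj ψ φ) - rankOneProj ψ (T φ) =
      ⟪ψ, φ⟫_ℝ • T ψ - ⟪ψ, T φ⟫_ℝ • ψ := by
  simp [rankOneProj]

lemma norm_koopman {μ : Measure Ω} (hσ : MeasurePreserving shiftMap μ μ)
    {K : E μ →L[ℝ] E μ} (hK : IsKoopman K) (g : E μ) : ‖K g‖ = ‖g‖ := by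
  rw [Lp.ext ((hK g).trans (Lp.coeFn_compMeasurePreserving g hσ).symm),
    Lp.norm_compMeasurePreserving]

section HaarVectors

variable (μ : Measure Ω) [IsFiniteMeasure μ] {K L : E μ →L[ℝ] E μ}

noncomputable def indicatorLp (w : List Bool) : E μ :=
  indicatorConstLp 2 (measurableSet_cylinder w) (measure_ne_top μ _) (1 : ℝ)

noncomputable def haarVec (w : List Bool) : E μ :=
  (√2 ^ w.length) • (indicatorLp μ (w ++ [true]) - indicatorLp μ (w ++ [false]))

variable {μ}

lemma coeFn_indicatorLp (w : List Bool) :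
    indicatorLp μ w =ᵐ[μ] (cylinder w).indicator 1 :=
  indicatorConstLp_coeFn

lemma coeFn_haarVec (w : List Bool) : haarVec μ w =ᵐ[μ] haarFun w := by
  have hc : (2 : ℝ) ^ ((w.length : ℝ) / 2) = √2 ^ w.length := by
    rw [Real.sqrt_eq_rpow, ← Real.rpow_natCast, ← Real.rpow_mul zero_le_two]
    ring_nf
  filter_upwards [Lp.coeFn_smul (√2 ^ w.length) (indicatorLp μ (w ++ [true]) -
      indicatorLp μ (w ++ [false])), Lp.coeFn_sub (indicatorLp μ (w ++ [true]))
      (indicatorLp μ (w ++ [false])), coeFn_indicatorLp (μ := μ) (w ++ [true]),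
      coeFn_indicatorLp (μ := μ) (w ++ [false])] with x h₁ h₂ h₃ h₄
  rw [haarVec, h₁, Pi.smul_apply, h₂, Pi.sub_apply, h₃, h₄, haarFun, hc, smul_eq_mul]

lemma inner_indicatorLp (s t : List Bool) :
    ⟪indicatorLp μ s, indicatorLp μ t⟫_ℝ = μ.real (cylinder s ∩ cylinder t) :=
  L2.real_inner_indicatorConstLp_one_indicatorConstLp_one _ _

lemma koopman_indicatorLp (hσ : Measure.QuasiMeasurePreserving shiftMap μ μ)
    (hK : IsKoopman K) (w : List Bool) :
    K (indicatorLp μ w) = indicatorLp μ (false :: w) + indicatorLp μ (true :: w) := by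
  refine Lp.ext ((hK _).trans ?_)
  filter_upwards [hσ.ae_eq_comp (coeFn_indicatorLp w),
      Lp.coeFn_add (indicatorLp μ (false :: w)) (indicatorLp μ (true :: w)),
      coeFn_indicatorLp (μ := μ) (false :: w), coeFn_indicatorLp (μ := μ) (true :: w)]
    with x h₁ h₂ h₃ h₄
  simp only [Function.comp_apply] at h₁
  rw [h₁, h₂, Pi.add_apply, h₃, h₄, ← Set.indicator_comp_right,
    preimage_shiftMap_cylinder, Set.indicator_union_of_disjoint (disjoint_cylinder_cons w)]
  rfl

lemma ruelle_indicatorLp_cons (hcons : ∀ a, Measure.QuasiMeasurePreserving (consSeq a) μ μ)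
    (hL : IsRuelle L) (b : Bool) (t : List Bool) :
    L (indicatorLp μ (b :: t)) = (1 / 2 : ℝ) • indicatorLp μ t := by
  refine Lp.ext ((hL _).trans ?_)
  filter_upwards [(hcons false).ae_eq_comp (coeFn_indicatorLp (b :: t)),
      (hcons true).ae_eq_comp (coeFn_indicatorLp (b :: t)),
      Lp.coeFn_smul (1 / 2 : ℝ) (indicatorLp μ t), coeFn_indicatorLp (μ := μ) t]
    with x h₁ h₂ h₃ h₄
  simp only [Function.comp_apply] at h₁ h₂
  rw [h₁, h₂, h₃, Pi.smul_apply, h₄]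
  by_cases hx : x ∈ cylinder t <;> cases b <;> simp [consSeq_mem_cylinder_cons, hx]

lemma koopman_haarVec (hσ : Measure.QuasiMeasurePreserving shiftMap μ μ)
    (hK : IsKoopman K) (v : List Bool) :
    K (haarVec μ v) = (√2)⁻¹ • (haarVec μ (false :: v) + haarVec μ (true :: v)) := by
  simp only [haarVec, map_smul, map_sub, koopman_indicatorLp hσ hK, List.cons_append,
    List.length_cons, pow_succ, smul_add, smul_smul]
  have : (√2)⁻¹ * (√2 ^ v.length * √2) = √2 ^ v.length := by field_simp
  rw [this]
  module

lemma ruelle_haarVec_cons (hcons : ∀ a, Measure.QuasiMeasurePreserving (consSeq a) μ μ)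
    (hL : IsRuelle L) (b : Bool) (t : List Bool) :
    L (haarVec μ (b :: t)) = (√2)⁻¹ • haarVec μ t := by
  simp only [haarVec, map_smul, map_sub, List.cons_append, ruelle_indicatorLp_cons hcons hL,
    List.length_cons, pow_succ, smul_smul, ← smul_sub]
  congr 1
  field_simp
  simp

/-- `χ_{[u c]}` is constant on `[v]`, the support of `e_v`, unless the two cylinders are
disjoint. -/
lemma inner_indicatorLp_append_haarVec (hμ : IsUniformBernoulli μ) {u v : List Bool}
    (huv : u ≠ v) (hl : u.length ≤ v.length) (c : Bool) :
    ⟪indicatorLp μ (u ++ [c]), haarVec μ v⟫_ℝ = 0 := by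
  rw [haarVec, inner_smul_right, inner_sub_right, inner_indicatorLp, inner_indicatorLp]
  by_cases h : u ++ [c] <+: v
  · have (d : Bool) : cylinder (u ++ [c]) ∩ cylinder (v ++ [d]) = cylinder (v ++ [d]) :=
      Set.inter_eq_right.2 (cylinder_subset_of_prefix (h.trans (List.prefix_append _ _)))
    rw [this, this, measureReal_cylinder hμ, measureReal_cylinder hμ]
    simp
  · have (d : Bool) : cylinder (u ++ [c]) ∩ cylinder (v ++ [d]) = ∅ := by
      refine Set.disjoint_iff_inter_eq_empty.1 (disjoint_cylinder ?_ fun h' => ?_)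
      · rw [List.prefix_concat_iff, not_or]
        exact ⟨fun h' => huv (List.append_inj_left' h' rfl), h⟩
      · have hlen := h'.length_le
        simp only [List.length_append, List.length_singleton] at hlen
        exact huv (List.append_inj_left' (h'.eq_of_length (by simp; omega)) rfl).symm
    simp [this]

lemma inner_haarVec_of_ne (hμ : IsUniformBernoulli μ) {u v : List Bool} (huv : u ≠ v)
    (hl : u.length ≤ v.length) :
    ⟪haarVec μ u, haarVec μ v⟫_ℝ = 0 := by
  rw [haarVec, inner_smul_left, inner_sub_left, inner_indicatorLp_append_haarVec hμ huv hl,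
    inner_indicatorLp_append_haarVec hμ huv hl, sub_zero, mul_zero]

lemma inner_haarVec_self (hμ : IsUniformBernoulli μ) (u : List Bool) :
    ⟪haarVec μ u, haarVec μ u⟫_ℝ = 1 := by
  simp only [haarVec, real_inner_smul_left, real_inner_smul_right, inner_sub_left,
    inner_sub_right, inner_indicatorLp, Set.inter_self, Set.inter_comm (cylinder (u ++ [false])),
    Set.disjoint_iff_inter_eq_empty.1 (disjoint_cylinder_append_singleton u),
    measureReal_empty, measureReal_cylinder hμ, List.length_append, List.length_singleton]
  have h : √2 ^ u.length * √2 ^ u.length * (1 / 2) ^ u.length = 1 := by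
    rw [← mul_pow, Real.mul_self_sqrt zero_le_two, ← mul_pow]
    norm_num
  rw [pow_succ]
  linear_combination h

lemma orthonormal_haarVec (hμ : IsUniformBernoulli μ) : Orthonormal ℝ (haarVec μ) := by
  refine orthonormal_iff_ite.2 fun u v => ?_
  split_ifs with huv
  · exact huv ▸ inner_haarVec_self hμ u
  · rcases le_total u.length v.length with hl | hl
    · exact inner_haarVec_of_ne hμ huv hl
    · rw [real_inner_comm]
      exact inner_haarVec_of_ne hμ (Ne.symm huv) hl

lemma inner_haarVec_cons_koopman (hμ : IsUniformBernoulli μ) (hK : IsKoopman K)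
    (b : Bool) (t v : List Bool) :
    ⟪haarVec μ (b :: t), K (haarVec μ v)⟫_ℝ = if v = t then (√2)⁻¹ else 0 := by
  rw [koopman_haarVec (measurePreserving_shiftMap hμ).quasiMeasurePreserving hK,
    real_inner_smul_right, inner_add_right, orthonormal_iff_ite.1 (orthonormal_haarVec hμ),
    orthonormal_iff_ite.1 (orthonormal_haarVec hμ)]
  by_cases h : v = t
  · subst h
    cases b <;> simp
  · cases b <;> simp [h, Ne.symm h]

lemma inner_haarVec_ruelle_cons (hμ : IsUniformBernoulli μ) (hL : IsRuelle L)
    (w : List Bool) (b : Bool) (t : List Bool) :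
    ⟪haarVec μ w, L (haarVec μ (b :: t))⟫_ℝ = if t = w then (√2)⁻¹ else 0 := by
  rw [ruelle_haarVec_cons (quasiMeasurePreserving_consSeq hμ) hL, real_inner_smul_right,
    orthonormal_iff_ite.1 (orthonormal_haarVec hμ)]
  split_ifs <;> simp_all [eq_comm]

end HaarVectors

end BernoulliShift

open BernoulliShift

theorem stmt6_general
    (μ : Measure Ω) [IsProbabilityMeasure μ]
    (hμ : ∀ w : List Bool, μ (cylinder w) = (1 / 2) ^ w.length)
    (K L : E μ →L[ℝ] E μ)
    (hK : ∀ g : E μ, (K g : Ω → ℝ) =ᵐ[μ] fun x => g (shiftMap x))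
    (hL : ∀ g : E μ, (L g : Ω → ℝ) =ᵐ[μ]
      fun x => (g (consSeq false x) + g (consSeq true x)) / 2)
    (e : List Bool → E μ) (he : ∀ w : List Bool, (e w : Ω → ℝ) =ᵐ[μ] haarFun w)
    (w w' : List Bool) (hw : 2 ≤ w.length) (hw' : 1 ≤ w'.length) :
    ((w' = w → ‖(K (rankOneProj (e w) (e w')) - rankOneProj (e w) (K (e w')))‖ ^ 2 = 1) ∧
     (w' = w.tail → w' ≠ w →
        ‖(K (rankOneProj (e w) (e w')) - rankOneProj (e w) (K (e w')))‖ ^ 2 = 1 / 2) ∧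
     (w' ≠ w → w' ≠ w.tail →
        ‖(K (rankOneProj (e w) (e w')) - rankOneProj (e w) (K (e w')))‖ ^ 2 = 0)) ∧
    ((w' = w ∨ (w'.tail = w ∧ w' ≠ w) →
        ‖(L (rankOneProj (e w) (e w')) - rankOneProj (e w) (L (e w')))‖ ^ 2 = 1 / 2) ∧
     (w' ≠ w → w'.tail ≠ w →
        ‖(L (rankOneProj (e w) (e w')) - rankOneProj (e w) (L (e w')))‖ ^ 2 = 0)) := by
  obtain rfl : e = haarVec μ := funext fun v => Lp.ext ((he v).trans (coeFn_haarVec v).symm)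
  have hON := orthonormal_haarVec hμ
  obtain ⟨b, t, rfl⟩ := List.exists_cons_of_length_pos (by omega : 0 < w.length)
  simp only [apply_rankOneProj_sub_rankOneProj_apply, orthonormal_iff_ite.1 hON,
    inner_haarVec_cons_koopman hμ hK, List.tail_cons]
  refine ⟨⟨?_, fun hw't _ => ?_, fun h₁ h₂ => by simp [Ne.symm h₁, h₂]⟩, ?_⟩
  · rintro rfl
    simp [norm_koopman (measurePreserving_shiftMap hμ) hK, hON.1]
  · simp [hw't, norm_inv_sqrt_two_smul_sq (hON.1 _)]
  obtain ⟨b', t', rfl⟩ := List.exists_cons_of_length_pos (by omega : 0 < w'.length)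
  simp only [inner_haarVec_ruelle_cons hμ hL, List.tail_cons]
  refine ⟨?_, fun h₁ h₂ => by simp [Ne.symm h₁, h₂]⟩
  rintro (h | ⟨rfl, hne⟩)
  · obtain ⟨rfl, rfl⟩ := List.cons_eq_cons.1 h
    simp [ruelle_haarVec_cons (quasiMeasurePreserving_consSeq hμ) hL,
      norm_inv_sqrt_two_smul_sq (hON.1 _)]
  · simp [Ne.symm hne, norm_inv_sqrt_two_smul_sq (hON.1 _)]

/-- The values of `‖(K ê_w − ê_w K)(e_w̃)‖²` and `‖(L ê_w − ê_w L)(e_w̃)‖²`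
according to the relative position of the words `w` (with `ℓ(w) ≥ 2`) and
`w̃` (with `ℓ(w̃) ≥ 1`). -/
theorem stmt6
    (μ : Measure Ω) [IsProbabilityMeasure μ]
    (hμ : ∀ w : List Bool, μ (cylinder w) = (1 / 2) ^ w.length)
    (K L : E μ →L[ℝ] E μ)
    (hK : ∀ g : E μ, (K g : Ω → ℝ) =ᵐ[μ] fun x => g (shiftMap x))
    (hL : ∀ g : E μ, (L g : Ω → ℝ) =ᵐ[μ]
      fun x => (g (consSeq false x) + g (consSeq true x)) / 2)
    (hadj : ContinuousLinearMap.adjoint K = L)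
    (e : List Bool → E μ) (he : ∀ w : List Bool, (e w : Ω → ℝ) =ᵐ[μ] haarFun w)
    (w w' : List Bool) (hw : 2 ≤ w.length) (hw' : 1 ≤ w'.length) :
    ((w' = w → ‖(K (rankOneProj (e w) (e w')) - rankOneProj (e w) (K (e w')))‖ ^ 2 = 1) ∧
     (w' = w.tail → w' ≠ w →
        ‖(K (rankOneProj (e w) (e w')) - rankOneProj (e w) (K (e w')))‖ ^ 2 = 1 / 2) ∧
     (w' ≠ w → w' ≠ w.tail →
        ‖(K (rankOneProj (e w) (e w')) - rankOneProj (e w) (K (e w')))‖ ^ 2 = 0)) ∧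
    ((w' = w ∨ (w'.tail = w ∧ w' ≠ w) →
        ‖(L (rankOneProj (e w) (e w')) - rankOneProj (e w) (L (e w')))‖ ^ 2 = 1 / 2) ∧
     (w' ≠ w → w'.tail ≠ w →
        ‖(L (rankOneProj (e w) (e w')) - rankOneProj (e w) (L (e w')))‖ ^ 2 = 0)) :=
  stmt6_general μ hμ K L hK hL e he w w' hw hw'
end

section
/- Let 𝓗 be a real Hilbert space and W : 𝓗 → 𝓗 a linear map preserving the inner product (⟨Wx, Wy⟩ = ⟨x, y⟩ for all x, y). Then for all unit vectors ψ, φ ∈ 𝓗: ⟨φ, ψ⟩² − 2⟨φ, ψ⟩⟨Wφ, ψ⟩⟨Wψ, ψ⟩ + ⟨Wφ, ψ⟩² ≤ 9/8. -/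
open MeasureTheory ContinuousLinearMap
open scoped RealInnerProductSpace InnerProductSpace ENNReal

/-- For a linear inner-product-preserving map `W` of a real Hilbert space and unit
vectors `ψ, φ`: `⟨φ,ψ⟩² − 2⟨φ,ψ⟩⟨Wφ,ψ⟩⟨Wψ,ψ⟩ + ⟨Wφ,ψ⟩² ≤ 9/8`. -/
theorem stmt7
    {𝓗 : Type*} [NormedAddCommGroup 𝓗] [InnerProductSpace ℝ 𝓗] [CompleteSpace 𝓗]
    (W : 𝓗 →ₗ[ℝ] 𝓗) (hW : ∀ x y : 𝓗, ⟪W x, W y⟫_ℝ = ⟪x, y⟫_ℝ)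
    (ψ φ : 𝓗) (hψ : ‖ψ‖ = 1) (hφ : ‖φ‖ = 1) :
    ⟪φ, ψ⟫_ℝ ^ 2 - 2 * ⟪φ, ψ⟫_ℝ * ⟪W φ, ψ⟫_ℝ * ⟪W ψ, ψ⟫_ℝ + ⟪W φ, ψ⟫_ℝ ^ 2 ≤ 9 / 8 := by
  have hxx : ⟪W φ, W φ⟫_ℝ = 1 := by
    rw [hW, real_inner_self_eq_norm_sq, hφ]; norm_num
  have huu : ⟪W ψ, W ψ⟫_ℝ = 1 := by
    rw [hW, real_inner_self_eq_norm_sq, hψ]; norm_num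
  have hvv : ⟪ψ, ψ⟫_ℝ = 1 := by
    rw [real_inner_self_eq_norm_sq, hψ]; norm_num
  have ha : ⟪φ, ψ⟫_ℝ = ⟪W φ, W ψ⟫_ℝ := (hW φ ψ).symm
  set b := ⟪W φ, ψ⟫_ℝ with hb
  set c := ⟪W ψ, ψ⟫_ℝ with hc
  -- Cauchy-Schwarz instances
  have h1 := real_inner_mul_inner_self_le (W φ - b • ψ) (W ψ - c • ψ)
  have h2 := real_inner_mul_inner_self_le (W φ) ψ
  have h3 := real_inner_mul_inner_self_le (W ψ) ψ
  simp only [inner_sub_left, inner_sub_right, real_inner_smul_left, real_inner_smul_right,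
    hxx, huu, hvv, real_inner_comm (W φ) ψ, real_inner_comm (W ψ) ψ] at h1 h2 h3
  simp only [← hb, ← hc] at h1 h2 h3
  rw [ha]
  nlinarith [h1, h2, h3, sq_nonneg (⟪W φ, W ψ⟫_ℝ - b * c)]
end
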